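/- The map [CP², BO] → [CP², BG] induced by α: BO → BG is an epimorphism from ℤ onto ℤ/24. -/
import Mathlib


/-!
STATEMENT 10: The map [CP²,BO] → [CP²,BG] induced by α : BO → BG is an
epimorphism from ℤ onto ℤ/24.

Using the cofibration S² → CP² → S⁴ one obtains commuting exact sequences
  0 → [S⁴,BO] = ℤ → [CP²,BO] → [S²,BO] = ℤ/2 → 0
  [S³,BG] = ℤ/2 → [S⁴,BG] = ℤ/24 → [CP²,BG] → [S²,BG] = ℤ/2 → [S³,BG]
with α₄ : ℤ → ℤ/24 surjective (the J-homomorphism on π₃(O) is onto), α₂ an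
isomorphism and ρ₃ : [S³,BG] = ℤ/2 → [S⁴,BG] = ℤ/24 injective.  We encode
X = [CP²,BO], Y = [CP²,BG] as abstract abelian groups sitting in such a
diagram, together with the identifications X ≅ ℤ and Y ≅ ℤ/24, and conclude
that αX : X → Y is surjective — an epimorphism from ℤ onto ℤ/24.
-/

theorem CP2_BO_to_BG_epi
    (X Y : Type*) [AddCommGroup X] [AddCommGroup Y]
    -- [CP²,BO] = ℤ and [CP²,BG] = ℤ/24:
    (hX : Nonempty (X ≃+ ℤ)) (hY : Nonempty (Y ≃+ ZMod 24))
    -- top row: 0 → [S⁴,BO] = ℤ → [CP²,BO] → [S²,BO] = ℤ/2 → 0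
    (b : ℤ →+ X) (c : X →+ ZMod 2)
    (hb : Function.Injective b) (htop : Function.Exact b c)
    (hc : Function.Surjective c)
    -- bottom row: [S³,BG] = ℤ/2 →ρ₃ [S⁴,BG] = ℤ/24 → [CP²,BG] → [S²,BG] = ℤ/2 →ρ₂ [S³,BG]
    (ρ₃ : ZMod 2 →+ ZMod 24) (b' : ZMod 24 →+ Y) (c' : Y →+ ZMod 2) (ρ₂ : ZMod 2 →+ ZMod 2)
    (hbot₁ : Function.Exact ρ₃ b') (hbot₂ : Function.Exact b' c')
    (hbot₃ : Function.Exact c' ρ₂)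
    (hρ₃ : Function.Injective ρ₃)
    -- vertical maps induced by α : BO → BG and commuting squares
    (α₄ : ℤ →+ ZMod 24) (αX : X →+ Y) (α₂ : ZMod 2 →+ ZMod 2)
    (sq₁ : ∀ t : ℤ, αX (b t) = b' (α₄ t))
    (sq₂ : ∀ t : X, α₂ (c t) = c' (αX t))
    (hα₄ : Function.Surjective α₄)            -- J : ℤ ↠ ℤ/24
    (hα₂ : Function.Bijective α₂) :           -- α₂ is an isomorphism
    Function.Surjective αX := by
  intro y
  obtain ⟨s, hs⟩ := hα₂.2 (c' y)
  obtain ⟨x, hx⟩ := hc s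
  have h1 : c' (y - αX x) = 0 := by
    rw [map_sub, ← sq₂, hx, hs, sub_self]
  obtain ⟨m, hm⟩ := (hbot₂ _).mp h1
  obtain ⟨t, ht⟩ := hα₄ m
  refine ⟨x + b t, ?_⟩
  rw [map_add, sq₁, ht, hm]
  abel
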